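/- arXiv:1603.07969 — 2 statements merged into one kernel-verified Lean document; each statement's English description precedes it below -/
import Mathlib

section
/- Let θ: ℝ → ℂ have integrable Fourier transform and let ρ be a symmetric nonnegative trace-class operator on L²(ℝ). Then Tr(X θ[ρ] X) = θ(0) · Tr(XρX), where θ[ρ] := (2π)^{-1/2} ∫ e^{ikX} ρ e^{-ikX} θ̂(k) dk. -/
open MeasureTheory Complex

/-! Conjugation by the phase `e^{ikX}` commutes with `X` and leaves every `|ψⱼ(x)|²` unchanged,
so the inner trace in `Tr(X θ[ρ] X)` equals `Tr(X ρ X)` for every `k`. What remains is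
`(2π)^{-1/2} ∫ θ̂(k) dk = θ(0)`, Fourier inversion at the origin. -/

lemma norm_exp_I_mul_ofReal_mul_ofReal (k x : ℝ) : ‖exp (I * k * x)‖ = 1 := by
  rw [show I * k * x = ((k * x : ℝ) : ℂ) * I by push_cast; ring, norm_exp_ofReal_mul_I]

lemma mul_conj_of_norm_eq_one {u : ℂ} (hu : ‖u‖ = 1) (z : ℂ) :
    (u * z) * (starRingEnd ℂ) (u * z) = ((‖z‖ ^ 2 : ℝ) : ℂ) := by
  rw [mul_conj, normSq_eq_norm_sq, norm_mul, hu, one_mul]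

lemma integral_sq_mul_phase_mul_conj {u : ℝ → ℂ} (hu : ∀ x, ‖u x‖ = 1) (f : ℝ → ℂ) :
    ∫ x : ℝ, (x : ℂ) ^ 2 * ((u x * f x) * (starRingEnd ℂ) (u x * f x))
      = ((∫ x : ℝ, x ^ 2 * ‖f x‖ ^ 2 : ℝ) : ℂ) := by
  rw [← integral_complex_ofReal]
  congr 1 with x
  rw [mul_conj_of_norm_eq_one (hu x)]
  push_cast
  rfl

theorem trace_X_theta_rho_X_general (θf θhat : ℝ → ℂ)
    (hinv : ∀ X : ℝ, θf X =
      ((Real.sqrt (2 * Real.pi) : ℝ) : ℂ)⁻¹ *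
        ∫ k : ℝ, θhat k * Complex.exp (Complex.I * k * X))
    (lam : ℕ → ℝ) (ψ : ℕ → ℝ → ℂ)
    (TrX : ℝ) (hTrX : HasSum (fun j => lam j * ∫ x : ℝ, x ^ 2 * ‖ψ j x‖ ^ 2) TrX)
    (TrThetaX : ℂ)
    (hTrThetaX : TrThetaX = ((Real.sqrt (2 * Real.pi) : ℝ) : ℂ)⁻¹ *
      ∫ k : ℝ, θhat k * ∑' j, (lam j : ℂ) *
        ∫ x : ℝ, (x : ℂ) ^ 2 * ((Complex.exp (Complex.I * k * x) * ψ j x) *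
          (starRingEnd ℂ) (Complex.exp (Complex.I * k * x) * ψ j x))) :
    TrThetaX = θf 0 * TrX := by
  have inner_trace : ∀ k : ℝ, (∑' j, (lam j : ℂ) *
      ∫ x : ℝ, (x : ℂ) ^ 2 * ((Complex.exp (Complex.I * k * x) * ψ j x) *
        (starRingEnd ℂ) (Complex.exp (Complex.I * k * x) * ψ j x))) = TrX := by
    intro k
    simp only [integral_sq_mul_phase_mul_conj (norm_exp_I_mul_ofReal_mul_ofReal k), ← ofReal_mul]
    exact (hasSum_ofReal.mpr hTrX).tsum_eq
  rw [hTrThetaX, hinv 0]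
  simp only [inner_trace, integral_mul_const, ofReal_zero, mul_zero, exp_zero, mul_one]
  ring

/-- Let `θf : ℝ → ℂ` have integrable Fourier transform `θhat` (Fourier inversion
`θf X = (2π)^{-1/2} ∫ θhat(k) e^{ikX} dk` holds), and let `ρ = ∑ⱼ λⱼ |ψⱼ⟩⟨ψⱼ|` be a
symmetric nonnegative trace-class operator on `L²(ℝ)`.  With
`Tr(X ρ X) = ∑ⱼ λⱼ ∫ x²|ψⱼ(x)|² dx` and
`Tr(X θ[ρ] X) = (2π)^{-1/2} ∫ θhat(k) ∑ⱼ λⱼ ∫ x² |e^{ikx}ψⱼ(x)|² dx dk`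
(coming from `θ[ρ] = (2π)^{-1/2} ∫ e^{ikX} ρ e^{-ikX} θhat(k) dk`), one has
`Tr(X θ[ρ] X) = θf(0) · Tr(X ρ X)`. -/
theorem trace_X_theta_rho_X (θf θhat : ℝ → ℂ) (hθhat : Integrable θhat)
    (hinv : ∀ X : ℝ, θf X =
      ((Real.sqrt (2 * Real.pi) : ℝ) : ℂ)⁻¹ *
        ∫ k : ℝ, θhat k * Complex.exp (Complex.I * k * X))
    (lam : ℕ → ℝ) (hlam : ∀ j, 0 ≤ lam j) (ψ : ℕ → ℝ → ℂ)
    (hmeas : ∀ j, AEStronglyMeasurable (ψ j) volume)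
    (horth : ∀ j l, (∫ x : ℝ, (starRingEnd ℂ) (ψ j x) * ψ l x) = if j = l then 1 else 0)
    (TrX : ℝ) (hTrX : HasSum (fun j => lam j * ∫ x : ℝ, x ^ 2 * ‖ψ j x‖ ^ 2) TrX)
    (TrThetaX : ℂ)
    (hTrThetaX : TrThetaX = ((Real.sqrt (2 * Real.pi) : ℝ) : ℂ)⁻¹ *
      ∫ k : ℝ, θhat k * ∑' j, (lam j : ℂ) *
        ∫ x : ℝ, (x : ℂ) ^ 2 * ((Complex.exp (Complex.I * k * x) * ψ j x) *
          (starRingEnd ℂ) (Complex.exp (Complex.I * k * x) * ψ j x))) :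
    TrThetaX = θf 0 * TrX :=
  trace_X_theta_rho_X_general θf θhat hinv lam ψ TrX hTrX TrThetaX hTrThetaX
end

section
/- Let θ: ℝ → ℂ be such that (1+k²)θ̂(k) is integrable, and let ρ be a symmetric nonnegative trace-class operator on L²(ℝ) with finite kinetic energy Tr((i∇)ρ(i∇)) < ∞. Then Tr((i∇) θ[ρ] (i∇)) = θ(0)·Tr((i∇)ρ(i∇)) + i·θ'(0)·Tr((i∇)ρ + ρ(i∇)) − θ''(0)·Tr ρ. -/
/-! Expanding `‖(i∇ - k)ψ‖² = ‖ψ'‖² + k²‖ψ‖² - 2k⟨ψ, i∇ψ⟩` (the two cross terms agree because `i∇`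
is symmetric, by integration by parts) turns the `k`-integrand into `θ̂(k)` times a quadratic
polynomial in `k`. Differentiating the inversion formula under the integral sign identifies the
moments `∫ θ̂`, `∫ k θ̂`, `∫ k² θ̂` with `√(2π)` times `θ(0)`, `-iθ'(0)`, `-θ''(0)`. -/

open MeasureTheory Complex ComplexConjugate

theorem MeasureTheory.Integrable.pow_mul_of_one_add_sq {f : ℝ → ℂ}
    (hf : Integrable fun k : ℝ => ((1 + k ^ 2 : ℝ) : ℂ) * f k) {n : ℕ} (hn : n ≤ 2) :
    Integrable fun k : ℝ => (k : ℂ) ^ n * f k := by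
  have hpos : ∀ k : ℝ, ((1 + k ^ 2 : ℝ) : ℂ) ≠ 0 := fun k => ofReal_ne_zero.2 (by positivity)
  have hmeas : AEStronglyMeasurable f volume := by
    have hcont : Continuous fun k : ℝ => ((1 + k ^ 2 : ℝ) : ℂ)⁻¹ :=
      Continuous.inv₀ (by fun_prop) hpos
    refine (hcont.aestronglyMeasurable.mul hf.aestronglyMeasurable).congr (ae_of_all _ fun k => ?_)
    exact inv_mul_cancel_left₀ (hpos k) (f k)
  refine hf.norm.mono' ((by fun_prop : Continuous fun k : ℝ => (k : ℂ) ^ n).aestronglyMeasurable.mul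
    hmeas) (ae_of_all _ fun k => ?_)
  rw [norm_mul, norm_mul, norm_pow, norm_real, norm_real, Real.norm_eq_abs, Real.norm_eq_abs,
    abs_of_pos (by positivity : (0 : ℝ) < 1 + k ^ 2)]
  gcongr
  interval_cases n <;> nlinarith [sq_abs k, abs_nonneg k, sq_nonneg (|k| - 1)]

theorem hasDerivAt_integral_mul_cexp {w : ℝ → ℂ} (hw : Integrable w)
    (hkw : Integrable fun k : ℝ => (k : ℂ) * w k) (X₀ : ℝ) :
    HasDerivAt (fun X : ℝ => ∫ k : ℝ, w k * cexp (I * k * X))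
      (∫ k : ℝ, I * k * w k * cexp (I * k * X₀)) X₀ := by
  have hnorm : ∀ k X : ℝ, ‖cexp (I * k * X)‖ = 1 := fun k X => by
    rw [norm_exp]; simp
  have hmeas : ∀ X : ℝ, AEStronglyMeasurable (fun k : ℝ => w k * cexp (I * k * X)) volume :=
    fun X => hw.aestronglyMeasurable.mul (by fun_prop : Continuous _).aestronglyMeasurable
  have hderiv : ∀ k X : ℝ, HasDerivAt (fun X : ℝ => w k * cexp (I * k * X))
      (I * k * w k * cexp (I * k * X)) X := fun k X => by
    have h := (((hasDerivAt_id (X : ℂ)).const_mul (I * k)).cexp.const_mul (w k)).comp_ofReal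
    simpa only [mul_one, id, mul_comm, mul_left_comm, mul_assoc] using h
  refine (hasDerivAt_integral_of_dominated_loc_of_deriv_le (bound := fun k : ℝ => ‖(k : ℂ) * w k‖)
    (Metric.ball_mem_nhds X₀ one_pos) (.of_forall hmeas)
    (hw.norm.mono' (hmeas X₀) (.of_forall fun k => by rw [norm_mul, hnorm, mul_one]))
    (by fun_prop) (.of_forall fun (k : ℝ) X _ => ?_) hkw.norm
    (.of_forall fun (k : ℝ) X _ => hderiv k X)).2
  simp only [norm_mul, hnorm, norm_I, one_mul, mul_one, le_refl]

theorem deriv_const_mul_integral_mul_cexp {w : ℝ → ℂ} (hw : Integrable w)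
    (hkw : Integrable fun k : ℝ => (k : ℂ) * w k) (c : ℂ) :
    deriv (fun X : ℝ => c * ∫ k : ℝ, w k * cexp (I * k * X))
      = fun X : ℝ => c * ∫ k : ℝ, I * k * w k * cexp (I * k * X) :=
  funext fun X => ((hasDerivAt_integral_mul_cexp hw hkw X).const_mul c).deriv

theorem integral_mul_quadratic_eq_of_inversion {θf θhat : ℝ → ℂ}
    (hθhat : Integrable fun k : ℝ => ((1 + k ^ 2 : ℝ) : ℂ) * θhat k)
    (hinv : ∀ X : ℝ, θf X = ((Real.sqrt (2 * Real.pi) : ℝ) : ℂ)⁻¹ *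
      ∫ k : ℝ, θhat k * cexp (I * k * X)) (E T M : ℂ) :
    ((Real.sqrt (2 * Real.pi) : ℝ) : ℂ)⁻¹ * ∫ k : ℝ, θhat k * (E + (k : ℂ) ^ 2 * T - k * M)
      = θf 0 * E + I * deriv θf 0 * M - deriv (deriv θf) 0 * T := by
  have h0 : Integrable θhat := by simpa using hθhat.pow_mul_of_one_add_sq (n := 0) (by norm_num)
  have h1 : Integrable fun k : ℝ => (k : ℂ) * θhat k := by
    simpa using hθhat.pow_mul_of_one_add_sq (n := 1) (by norm_num)
  have h2 : Integrable fun k : ℝ => (k : ℂ) ^ 2 * θhat k :=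
    hθhat.pow_mul_of_one_add_sq le_rfl
  have h1' : Integrable fun k : ℝ => I * k * θhat k := by
    simpa only [mul_assoc] using h1.const_mul I
  have h2' : Integrable fun k : ℝ => (k : ℂ) * (I * k * θhat k) :=
    (h2.const_mul I).congr (ae_of_all _ fun k => by ring)
  rw [show θf = _ from funext hinv, deriv_const_mul_integral_mul_cexp h0 h1,
    deriv_const_mul_integral_mul_cexp h1' h2']
  simp only [ofReal_zero, mul_zero, Complex.exp_zero, mul_one]
  have hsplit : ∫ k : ℝ, θhat k * (E + (k : ℂ) ^ 2 * T - k * M)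
      = E * (∫ k : ℝ, θhat k) + T * (∫ k : ℝ, (k : ℂ) ^ 2 * θhat k)
        - M * ∫ k : ℝ, (k : ℂ) * θhat k := by
    rw [← integral_const_mul, ← integral_const_mul, ← integral_const_mul,
      ← integral_add (by fun_prop) (by fun_prop), ← integral_sub (by fun_prop) (by fun_prop)]
    congr 1 with k
    ring
  have hfirst : ∫ k : ℝ, I * k * θhat k = I * ∫ k : ℝ, (k : ℂ) * θhat k := by
    simp only [mul_assoc, integral_const_mul]
  have hsecond : ∫ k : ℝ, I * k * (I * k * θhat k) = -∫ k : ℝ, (k : ℂ) ^ 2 * θhat k := by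
    rw [← integral_neg]
    congr 1 with k
    linear_combination ((k : ℂ) ^ 2 * θhat k) * I_mul_I
  rw [hsplit, hfirst, hsecond]
  linear_combination
    -((Real.sqrt (2 * Real.pi) : ℝ) : ℂ)⁻¹ * M * (∫ k : ℝ, (k : ℂ) * θhat k) * I_mul_I

theorem integral_mul_deriv_eq_neg_of_memLp_two {u v : ℝ → ℂ}
    (hu : Differentiable ℝ u) (hv : Differentiable ℝ v)
    (hu2 : MemLp u 2 volume) (hdu2 : MemLp (deriv u) 2 volume)
    (hv2 : MemLp v 2 volume) (hdv2 : MemLp (deriv v) 2 volume) :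
    ∫ x, u x * deriv v x = -∫ x, deriv u x * v x :=
  integral_mul_deriv_eq_deriv_mul_of_integrable (fun x _ => (hu x).hasDerivAt)
    (fun x _ => (hv x).hasDerivAt) (hu2.integrable_mul hdv2) (hdu2.integrable_mul hv2)
    (hu2.integrable_mul hv2)

theorem integral_conj_mul_deriv_eq_neg {ψ : ℝ → ℂ} (hψ : Differentiable ℝ ψ)
    (hψ2 : MemLp ψ 2 volume) (hdψ2 : MemLp (deriv ψ) 2 volume) :
    ∫ x, conj (ψ x) * deriv ψ x = -∫ x, conj (deriv ψ x) * ψ x := by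
  have hderiv : deriv (fun x => conj (ψ x)) = fun x => conj (deriv ψ x) :=
    funext fun x => (hψ x).hasDerivAt.star.deriv
  have hconj : Differentiable ℝ (fun x => conj (ψ x)) :=
    fun x => (hψ x).hasDerivAt.star.differentiableAt
  simpa only [hderiv] using
    integral_mul_deriv_eq_neg_of_memLp_two hconj hψ hψ2.star (hderiv ▸ hdψ2.star) hψ2 hdψ2

theorem integral_momentum_sub_mul_conj {ψ : ℝ → ℂ} (hψ : Differentiable ℝ ψ)
    (hψ2 : MemLp ψ 2 volume) (hdψ2 : MemLp (deriv ψ) 2 volume) (k : ℝ) :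
    ∫ x, (I * deriv ψ x - k * ψ x) * conj (I * deriv ψ x - k * ψ x)
      = ((∫ x, ‖deriv ψ x‖ ^ 2 : ℝ) : ℂ) + (k : ℂ) ^ 2 * (∫ x, conj (ψ x) * ψ x)
        - 2 * k * ∫ x, conj (ψ x) * (I * deriv ψ x) := by
  have hA : Integrable fun x => conj (deriv ψ x) * deriv ψ x := hdψ2.star.integrable_mul hdψ2
  have hB : Integrable fun x => conj (ψ x) * ψ x := hψ2.star.integrable_mul hψ2
  have hC : Integrable fun x => conj (ψ x) * deriv ψ x := hψ2.star.integrable_mul hdψ2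
  have hD : Integrable fun x => conj (deriv ψ x) * ψ x := hdψ2.star.integrable_mul hψ2
  have hexpand : ∀ x, (I * deriv ψ x - k * ψ x) * conj (I * deriv ψ x - k * ψ x)
      = conj (deriv ψ x) * deriv ψ x + (k : ℂ) ^ 2 * (conj (ψ x) * ψ x)
        - k * I * (conj (ψ x) * deriv ψ x) + k * I * (conj (deriv ψ x) * ψ x) := by
    intro x
    simp only [map_sub, map_mul, conj_I, conj_ofReal]
    linear_combination (-(deriv ψ x * conj (deriv ψ x))) * I_sq
  have hkinetic : ∫ x, conj (deriv ψ x) * deriv ψ x = ((∫ x, ‖deriv ψ x‖ ^ 2 : ℝ) : ℂ) := by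
    have hpt : ∀ x, conj (deriv ψ x) * deriv ψ x = ((‖deriv ψ x‖ ^ 2 : ℝ) : ℂ) := by
      intro x
      rw [conj_mul']
      push_cast
      rfl
    simp only [hpt]
    exact integral_ofReal
  have hmix : ∫ x, conj (ψ x) * (I * deriv ψ x) = I * ∫ x, conj (ψ x) * deriv ψ x := by
    simp only [mul_left_comm _ I, integral_const_mul]
  simp only [hexpand]
  rw [integral_add (by fun_prop) (by fun_prop), integral_sub (by fun_prop) (by fun_prop),
    integral_add hA (by fun_prop), integral_const_mul, integral_const_mul, integral_const_mul,
    hkinetic, hmix]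
  linear_combination (k * I) * integral_conj_mul_deriv_eq_neg hψ hψ2 hdψ2

/-- `ρ = ∑ⱼ λⱼ |ψⱼ⟩⟨ψⱼ|`, so that `Trρ`, `Ekin` and `Tmix` are `Tr ρ`, `Tr((i∇)ρ(i∇))` and
`Tr((i∇)ρ + ρ(i∇))`; by `(i∇)e^{ikX} = e^{ikX}((i∇) - k)`, `TrThetaKin` is `Tr((i∇) θ[ρ] (i∇))`. -/
theorem trace_grad_theta_rho_grad_general (θf θhat : ℝ → ℂ)
    (hθhat : Integrable fun k => ((1 + k ^ 2 : ℝ) : ℂ) * θhat k)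
    (hinv : ∀ X : ℝ, θf X =
      ((Real.sqrt (2 * Real.pi) : ℝ) : ℂ)⁻¹ *
        ∫ k : ℝ, θhat k * Complex.exp (Complex.I * k * X))
    (lam : ℕ → ℝ) (ψ : ℕ → ℝ → ℂ)
    (hdiff : ∀ j, Differentiable ℝ (ψ j))
    (hψ : ∀ j, MemLp (ψ j) 2 volume) (hdψ : ∀ j, MemLp (deriv (ψ j)) 2 volume)
    (horth : ∀ j l, (∫ x : ℝ, (starRingEnd ℂ) (ψ j x) * ψ l x) = if j = l then 1 else 0)
    (Trρ : ℝ) (hTrρ : HasSum lam Trρ)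
    (Ekin : ℝ) (hEkin : HasSum (fun j => lam j * ∫ x : ℝ, ‖deriv (ψ j) x‖ ^ 2) Ekin)
    (Tmix : ℂ) (hTmix : HasSum (fun j => ((2 * lam j : ℝ) : ℂ) *
      ∫ x : ℝ, (starRingEnd ℂ) (ψ j x) * (Complex.I * deriv (ψ j) x)) Tmix)
    (TrThetaKin : ℂ)
    (hTrThetaKin : TrThetaKin = ((Real.sqrt (2 * Real.pi) : ℝ) : ℂ)⁻¹ *
      ∫ k : ℝ, θhat k * ∑' j, (lam j : ℂ) *
        ∫ x : ℝ, (Complex.I * deriv (ψ j) x - (k : ℂ) * ψ j x) *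
          (starRingEnd ℂ) (Complex.I * deriv (ψ j) x - (k : ℂ) * ψ j x)) :
    TrThetaKin = θf 0 * Ekin + Complex.I * deriv θf 0 * Tmix
      - deriv (deriv θf) 0 * Trρ := by
  have hshifted : ∀ k : ℝ, ∑' j, (lam j : ℂ) *
      ∫ x : ℝ, (I * deriv (ψ j) x - k * ψ j x) * conj (I * deriv (ψ j) x - k * ψ j x)
      = Ekin + (k : ℂ) ^ 2 * Trρ - k * Tmix := by
    intro k
    rw [← (((hasSum_ofReal.2 hEkin).add ((hasSum_ofReal.2 hTrρ).mul_left ((k : ℂ) ^ 2))).sub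
      (hTmix.mul_left (k : ℂ))).tsum_eq]
    congr 1 with j
    rw [integral_momentum_sub_mul_conj (hdiff j) (hψ j) (hdψ j), (horth j j).trans (if_pos rfl)]
    push_cast
    ring
  rw [hTrThetaKin]
  simp only [hshifted]
  exact integral_mul_quadratic_eq_of_inversion hθhat hinv _ _ _

/-- Let `θf : ℝ → ℂ` be such that `(1+k²) θhat(k)` is integrable (`θhat` being its
Fourier transform, with the inversion formula holding), and let
`ρ = ∑ⱼ λⱼ |ψⱼ⟩⟨ψⱼ|` be a symmetric nonnegative trace-class operator on `L²(ℝ)`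
with finite kinetic energy `Tr((i∇)ρ(i∇)) = ∑ⱼ λⱼ ‖ψⱼ'‖₂² < ∞`.  Using
`(i∇)e^{ikX} = e^{ikX}((i∇) − k)`, the trace
`Tr((i∇) θ[ρ] (i∇)) = (2π)^{-1/2} ∫ θhat(k) ∑ⱼ λⱼ ‖(i∇ − k)ψⱼ‖₂² dk` satisfies
`Tr((i∇) θ[ρ] (i∇)) = θf(0) Tr((i∇)ρ(i∇)) + i θf'(0) Tr((i∇)ρ + ρ(i∇)) − θf''(0) Tr ρ`. -/
theorem trace_grad_theta_rho_grad (θf θhat : ℝ → ℂ)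
    (hθhat : Integrable fun k => ((1 + k ^ 2 : ℝ) : ℂ) * θhat k)
    (hinv : ∀ X : ℝ, θf X =
      ((Real.sqrt (2 * Real.pi) : ℝ) : ℂ)⁻¹ *
        ∫ k : ℝ, θhat k * Complex.exp (Complex.I * k * X))
    (lam : ℕ → ℝ) (hlam : ∀ j, 0 ≤ lam j) (ψ : ℕ → ℝ → ℂ)
    (hdiff : ∀ j, Differentiable ℝ (ψ j))
    (hψ : ∀ j, MemLp (ψ j) 2 volume) (hdψ : ∀ j, MemLp (deriv (ψ j)) 2 volume)
    (horth : ∀ j l, (∫ x : ℝ, (starRingEnd ℂ) (ψ j x) * ψ l x) = if j = l then 1 else 0)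
    (Trρ : ℝ) (hTrρ : HasSum lam Trρ)
    (Ekin : ℝ) (hEkin : HasSum (fun j => lam j * ∫ x : ℝ, ‖deriv (ψ j) x‖ ^ 2) Ekin)
    (Tmix : ℂ) (hTmix : HasSum (fun j => ((2 * lam j : ℝ) : ℂ) *
      ∫ x : ℝ, (starRingEnd ℂ) (ψ j x) * (Complex.I * deriv (ψ j) x)) Tmix)
    (TrThetaKin : ℂ)
    (hTrThetaKin : TrThetaKin = ((Real.sqrt (2 * Real.pi) : ℝ) : ℂ)⁻¹ *
      ∫ k : ℝ, θhat k * ∑' j, (lam j : ℂ) *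
        ∫ x : ℝ, (Complex.I * deriv (ψ j) x - (k : ℂ) * ψ j x) *
          (starRingEnd ℂ) (Complex.I * deriv (ψ j) x - (k : ℂ) * ψ j x)) :
    TrThetaKin = θf 0 * Ekin + Complex.I * deriv θf 0 * Tmix
      - deriv (deriv θf) 0 * Trρ :=
  trace_grad_theta_rho_grad_general θf θhat hθhat hinv lam ψ hdiff hψ hdψ horth Trρ hTrρ Ekin hEkin
    Tmix hTmix TrThetaKin hTrThetaKin
end
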